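/- For every integer m with 0 ≤ m ≤ 98, P(X_{2m+2} < 0 | X_{2m+1} < 0) = 1 - (1/2^{2m+1}) · C(2m+1, m+1), where C(2m+1, m+1) is the binomial coefficient. (The conditioning event has positive probability since P(X_{2m+1} < 0) ≥ 2^{-(2m+1)}.) -/

import Mathlib

/-!
On the full-measure event where every `C j` is `±1`, the product `∏ j ≤ k, (1 - δ C j)` equals
`(1 + δ)^a (1 - δ)^b`, where `a` and `b = k - a` count the negative and positive signs among the
first `k`. If `a ≤ b` this is at most `(1 - δ²)^a ≤ 1`; if `a > b` it is at least
`(1 + δ)(1 - δ²)^b ≥ (1 + δ)(1 - b δ²) > 1`, as long as `k δ (1 + δ) ≤ 2`, i.e. `k ≤ 198`.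
So `X k < 0` means that more than half of the first `k` signs are negative. The negative
positions form a uniform random subset of `{1, …, k}`, and for `n = 2m + 1` complementation gives
`P(X n < 0) = 1/2`. Losing at both times `n` and `n + 1` means having at least `m + 2` negative
signs among the first `n`, or exactly `m + 1` of them followed by a negative sign; hence
`P(X n < 0, X (n + 1) < 0) = 1/2 - C(n, m + 1) / 2^(n + 1)`.
-/

open MeasureTheory ProbabilityTheory Finset
open scoped ENNReal

theorem one_add_pow_mul_one_sub_pow_le_one {δ : ℝ} (hδ₀ : 0 ≤ δ) (hδ₁ : δ ≤ 1) {a b : ℕ}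
    (hab : a ≤ b) : (1 + δ) ^ a * (1 - δ) ^ b ≤ 1 := by
  obtain ⟨c, rfl⟩ := Nat.exists_eq_add_of_le hab
  rw [pow_add, ← mul_assoc, ← mul_pow]
  have hsq : (1 + δ) * (1 - δ) ≤ 1 := by nlinarith
  exact mul_le_one₀ (pow_le_one₀ (by nlinarith) hsq) (by positivity)
    (pow_le_one₀ (by linarith) (by linarith))

theorem one_lt_one_add_pow_mul_one_sub_pow {δ : ℝ} (hδ₀ : 0 < δ) (hδ₁ : δ ≤ 1) {a b : ℕ}
    (hab : b < a) (hb : b * δ * (1 + δ) < 1) : 1 < (1 + δ) ^ a * (1 - δ) ^ b := by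
  have bernoulli : 1 - b * δ ^ 2 ≤ (1 - δ ^ 2) ^ b := by
    simpa [sub_eq_add_neg] using one_add_mul_le_pow (a := -δ ^ 2) (by nlinarith) b
  calc (1 : ℝ) < (1 + δ) * (1 - b * δ ^ 2) := by nlinarith
    _ ≤ (1 + δ) * (1 - δ ^ 2) ^ b := by gcongr
    _ = (1 + δ) ^ (b + 1) * (1 - δ) ^ b := by
      rw [show 1 - δ ^ 2 = (1 + δ) * (1 - δ) by ring, mul_pow]; ring
    _ ≤ (1 + δ) ^ a * (1 - δ) ^ b := by gcongr; exacts [by linarith, hab]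

theorem one_lt_one_add_pow_mul_one_sub_pow_iff {δ : ℝ} (hδ₀ : 0 < δ) (hδ₁ : δ ≤ 1) {a b : ℕ}
    (hab : (a + b) * δ * (1 + δ) ≤ 2) : 1 < (1 + δ) ^ a * (1 - δ) ^ b ↔ b < a := by
  refine ⟨fun h => ?_, fun h => one_lt_one_add_pow_mul_one_sub_pow hδ₀ hδ₁ h ?_⟩
  · by_contra! hle
    exact h.not_ge (one_add_pow_mul_one_sub_pow_le_one hδ₀.le hδ₁ hle)
  · have : (b : ℝ) + 1 ≤ a := by exact_mod_cast h
    nlinarith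

theorem natCast_mul_inv_two_pow_eq_inv_two {N n : ℕ} (h : 2 * N = 2 ^ n) :
    (N : ℝ≥0∞) * 2⁻¹ ^ n = 2⁻¹ := by
  have two_mul_inv : (2 : ℝ≥0∞) * 2⁻¹ = 1 :=
    ENNReal.mul_inv_cancel two_ne_zero ENNReal.ofNat_ne_top
  have hN : (2 : ℝ≥0∞) ^ n = 2 * N := by exact_mod_cast h.symm
  calc (N : ℝ≥0∞) * 2⁻¹ ^ n = 2⁻¹ * (2 * N) * 2⁻¹ ^ n := by
        rw [← mul_assoc, mul_comm 2⁻¹ 2, two_mul_inv, one_mul]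
    _ = 2⁻¹ := by rw [← hN, mul_assoc, ← mul_pow, two_mul_inv, one_pow, mul_one]

section Counting

variable {α : Type*} [DecidableEq α] {s : Finset α} {a : α} {m : ℕ}

theorem card_filter_powerset_insert (ha : a ∉ s) (p : Finset α → Prop) [DecidablePred p] :
    #{u ∈ (insert a s).powerset | p u} =
      #{u ∈ s.powerset | p u} + #{u ∈ s.powerset | p (insert a u)} := by
  simp only [card_filter, sum_powerset_insert ha]

theorem two_mul_card_filter_powerset_card_lt (hs : Odd #s) :
    2 * #{u ∈ s.powerset | #s < 2 * #u} = 2 ^ #s := by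
  have hcompl : #{u ∈ s.powerset | #s < 2 * #u} = #{u ∈ s.powerset | ¬#s < 2 * #u} := by
    obtain ⟨k, hk⟩ := hs
    refine card_nbij' (s \ ·) (s \ ·) ?_ ?_ ?_ ?_ <;> intro u hu <;>
      simp only [coe_filter, mem_powerset, Set.mem_ofPred_eq] at hu ⊢
    iterate 2
      have := card_le_card hu.1
      rw [card_sdiff_of_subset hu.1]
      exact ⟨sdiff_subset, by omega⟩
    iterate 2 exact Finset.sdiff_sdiff_eq_self hu.1
  rw [two_mul]
  nth_rw 2 [hcompl]
  rw [card_filter_add_card_filter_not, card_powerset]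

theorem card_filter_powerset_card_lt_eq_add_choose (hs : #s = 2 * m + 1) :
    #{u ∈ s.powerset | #s < 2 * #u} =
      #{u ∈ s.powerset | #s + 1 < 2 * #u} + (#s).choose (m + 1) := by
  rw [← card_powersetCard, powersetCard_eq_filter, ← card_union_of_disjoint, ← filter_or]
  · congr 1
    exact filter_congr fun u _ => by omega
  · exact disjoint_filter.2 fun u _ h => by omega

theorem card_filter_powerset_insert_erase_and_add_choose (ha : a ∉ s) (hs : #s = 2 * m + 1) :
    #{u ∈ (insert a s).powerset | 2 * m + 1 < 2 * #(u.erase a) ∧ 2 * m + 2 < 2 * #u} +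
      (2 * m + 1).choose (m + 1) = 2 ^ (2 * m + 1) := by
  have without_a : #{u ∈ s.powerset | 2 * m + 1 < 2 * #(u.erase a) ∧ 2 * m + 2 < 2 * #u} =
      #{u ∈ s.powerset | #s + 1 < 2 * #u} :=
    congrArg card <| filter_congr fun u hu => by
      rw [erase_eq_of_notMem (notMem_of_mem_powerset_of_notMem hu ha)]; omega
  have with_a : #{u ∈ s.powerset |
      2 * m + 1 < 2 * #((insert a u).erase a) ∧ 2 * m + 2 < 2 * #(insert a u)} =
      #{u ∈ s.powerset | #s < 2 * #u} :=
    congrArg card <| filter_congr fun u hu => by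
      have hau := notMem_of_mem_powerset_of_notMem hu ha
      rw [erase_insert hau, card_insert_of_notMem hau]; omega
  rw [card_filter_powerset_insert ha, without_a, with_a, ← hs,
    ← two_mul_card_filter_powerset_card_lt ⟨m, hs⟩, card_filter_powerset_card_lt_eq_add_choose hs]
  ring

end Counting

section SignSequence

variable {Ω : Type*} {C : ℕ → Ω → ℝ}

noncomputable def negIndices (C : ℕ → Ω → ℝ) (t : Finset ℕ) (ω : Ω) : Finset ℕ :=
  {j ∈ t | C j ω = -1}

theorem negIndices_subset (t : Finset ℕ) (ω : Ω) : negIndices C t ω ⊆ t :=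
  filter_subset _ _

theorem negIndices_erase (t : Finset ℕ) (a : ℕ) (ω : Ω) :
    negIndices C (t.erase a) ω = (negIndices C t ω).erase a :=
  filter_erase _ _ _

theorem prod_one_sub_mul_eq (δ : ℝ) {t : Finset ℕ} {ω : Ω}
    (hC : ∀ j ∈ t, C j ω = 1 ∨ C j ω = -1) :
    ∏ j ∈ t, (1 - δ * C j ω) =
      (1 + δ) ^ #(negIndices C t ω) * (1 - δ) ^ (#t - #(negIndices C t ω)) := by
  have hcard : #t - #(negIndices C t ω) = #{j ∈ t | ¬C j ω = -1} := by
    rw [← card_filter_add_card_filter_not (s := t) (fun j => C j ω = -1), negIndices,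
      Nat.add_sub_cancel_left]
  rw [hcard, ← prod_filter_mul_prod_filter_not t (fun j => C j ω = -1), negIndices]
  congr 1
  · exact prod_eq_pow_card fun j hj => by simp [(mem_filter.1 hj).2, sub_eq_add_neg]
  · refine prod_eq_pow_card fun j hj => ?_
    obtain ⟨hjt, hj⟩ := mem_filter.1 hj
    simp [(hC j hjt).resolve_right hj]

theorem one_sub_prod_neg_iff {δ : ℝ} (hδ₀ : 0 < δ) (hδ₁ : δ ≤ 1) {t : Finset ℕ} {ω : Ω}
    (hC : ∀ j ∈ t, C j ω = 1 ∨ C j ω = -1) (ht : #t * δ * (1 + δ) ≤ 2) :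
    1 - ∏ j ∈ t, (1 - δ * C j ω) < 0 ↔ #t < 2 * #(negIndices C t ω) := by
  have hle := card_le_card (negIndices_subset (C := C) t ω)
  rw [sub_neg, prod_one_sub_mul_eq δ hC, one_lt_one_add_pow_mul_one_sub_pow_iff hδ₀ hδ₁]
  · omega
  · rwa [← Nat.cast_add, Nat.add_sub_cancel' hle]

variable [MeasurableSpace Ω] {μ : Measure Ω}

theorem measurableSet_negIndices_eq (hC : ∀ j, Measurable (C j)) (t s : Finset ℕ) :
    MeasurableSet {ω | negIndices C t ω = s} := by
  simp only [Finset.ext_iff, negIndices, mem_filter, Set.ofPred_forall]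
  exact MeasurableSet.iInter fun j => by measurability

theorem toReal_cond_eq_one_sub [IsFiniteMeasure μ] {s t : Set Ω} (hs : MeasurableSet s)
    (hs₀ : μ s ≠ 0) {x : ℝ≥0∞} (h : μ (s ∩ t) + x = μ s) :
    (μ[t | s]).toReal = 1 - x.toReal / (μ s).toReal := by
  have hreal := congrArg ENNReal.toReal h
  rw [ENNReal.toReal_add (measure_ne_top _ _) (ne_top_of_le_ne_top (measure_ne_top μ s)
    (h ▸ le_add_self))] at hreal
  have hpos : 0 < (μ s).toReal := ENNReal.toReal_pos hs₀ (measure_ne_top _ _)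
  rw [cond_apply hs, ENNReal.toReal_mul, ENNReal.toReal_inv]
  field_simp
  linarith

variable [IsProbabilityMeasure μ] (hC : ∀ j, Measurable (C j))
  (hHead : ∀ j, μ {ω | C j ω = 1} = 1/2) (hTail : ∀ j, μ {ω | C j ω = -1} = 1/2)
include hC hHead hTail

theorem ae_eq_one_or_eq_neg_one : ∀ᵐ ω ∂μ, ∀ j, C j ω = 1 ∨ C j ω = -1 := by
  refine ae_all_iff.2 fun j => ?_
  have hdisj : Disjoint {ω | C j ω = 1} {ω | C j ω = -1} :=
    Set.disjoint_left.2 fun ω (h1 : C j ω = 1) (h2 : C j ω = -1) => by linarith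
  have hfull : μ ({ω | C j ω = 1} ∪ {ω | C j ω = -1}) = 1 := by
    rw [measure_union hdisj (measurableSet_eq_fun (hC j) measurable_const), hHead, hTail,
      ENNReal.add_halves]
  exact (prob_compl_eq_zero_iff (by measurability)).2 hfull

theorem ae_one_sub_prod_Icc_neg_iff {δ : ℝ} (hδ₀ : 0 < δ) (hδ₁ : δ ≤ 1) {K : ℕ}
    (hK : K * δ * (1 + δ) ≤ 2) :
    ∀ᵐ ω ∂μ, ∀ k ≤ K,
      1 - ∏ j ∈ Icc 1 k, (1 - δ * C j ω) < 0 ↔ k < 2 * #(negIndices C (Icc 1 k) ω) := by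
  filter_upwards [ae_eq_one_or_eq_neg_one hC hHead hTail] with ω hω k hk
  have hk' : (#(Icc 1 k) : ℝ) ≤ K := by simpa using hk
  rw [one_sub_prod_neg_iff hδ₀ hδ₁ (fun j _ => hω j)
    ((mul_le_mul_of_nonneg_right (mul_le_mul_of_nonneg_right hk' hδ₀.le) (by linarith)).trans hK),
    Nat.card_Icc, Nat.add_sub_cancel]

theorem measure_negIndices_eq (hInd : iIndepFun C μ) {t s : Finset ℕ} (hst : s ⊆ t) :
    μ {ω | negIndices C t ω = s} = 2⁻¹ ^ #t := by
  have hpattern : {ω | negIndices C t ω = s} =ᵐ[μ]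
      ⋂ j ∈ t, C j ⁻¹' {if j ∈ s then -1 else 1} := by
    refine Filter.eventuallyEq_set.2 ?_
    filter_upwards [ae_eq_one_or_eq_neg_one hC hHead hTail] with ω hω
    simp only [Set.mem_iInter, Set.mem_preimage, Set.mem_singleton_iff, Finset.ext_iff,
      negIndices, mem_filter]
    constructor
    · intro h j hj
      split_ifs with hjs
      · exact ((h j).2 hjs).2
      · exact (hω j).resolve_right fun hneg => hjs ((h j).1 ⟨hj, hneg⟩)
    · intro h j
      constructor
      · rintro ⟨hj, hneg⟩
        by_contra hjs
        rw [h j hj, if_neg hjs] at hneg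
        norm_num at hneg
      · intro hjs
        exact ⟨hst hjs, by simpa [hjs] using h j (hst hjs)⟩
  rw [measure_congr hpattern,
    hInd.measure_inter_preimage_eq_mul t (fun _ _ => measurableSet_singleton _)]
  refine prod_eq_pow_card fun j _ => ?_
  split_ifs
  · exact (hTail j).trans (one_div 2)
  · exact (hHead j).trans (one_div 2)

theorem measure_setOf_eq_of_ae_iff_negIndices (hInd : iIndepFun C μ) {P : Ω → Prop}
    (t : Finset ℕ) (Q : Finset ℕ → Prop) [DecidablePred Q]
    (hPQ : ∀ᵐ ω ∂μ, P ω ↔ Q (negIndices C t ω)) :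
    μ {ω | P ω} = #{s ∈ t.powerset | Q s} * 2⁻¹ ^ #t := by
  have hPQ' : {ω | P ω} =ᵐ[μ] {ω | Q (negIndices C t ω)} := hPQ.mono fun _ h => propext h
  have hunion : {ω | Q (negIndices C t ω)} =
      ⋃ s ∈ {s ∈ t.powerset | Q s}, {ω | negIndices C t ω = s} := by
    ext ω
    simp [negIndices_subset]
  rw [measure_congr hPQ', hunion, measure_biUnion_finset,
    sum_congr rfl fun s hs =>
      measure_negIndices_eq hC hHead hTail hInd (mem_powerset.1 (mem_filter.1 hs).1),
    sum_const, nsmul_eq_mul]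
  · exact fun s _ s' _ hne => Set.disjoint_left.2 fun ω h h' => hne (h.symm.trans h')
  · exact fun s _ => measurableSet_negIndices_eq hC t s

theorem measure_eq_inv_two_of_ae_iff (hInd : iIndepFun C μ) {s : Finset ℕ} {m : ℕ}
    (hs : #s = 2 * m + 1) {P : Ω → Prop}
    (hP : ∀ᵐ ω ∂μ, P ω ↔ 2 * m + 1 < 2 * #(negIndices C s ω)) :
    μ {ω | P ω} = 2⁻¹ := by
  rw [measure_setOf_eq_of_ae_iff_negIndices hC hHead hTail hInd s (fun u => #s < 2 * #u)
    (by rwa [hs])]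
  exact natCast_mul_inv_two_pow_eq_inv_two (two_mul_card_filter_powerset_card_lt ⟨m, hs⟩)

theorem measure_inter_add_choose_eq_inv_two_of_ae_iff (hInd : iIndepFun C μ) {s : Finset ℕ}
    {a m : ℕ} (ha : a ∉ s) (hs : #s = 2 * m + 1) {P R : Ω → Prop}
    (hP : ∀ᵐ ω ∂μ, P ω ↔ 2 * m + 1 < 2 * #(negIndices C s ω))
    (hR : ∀ᵐ ω ∂μ, R ω ↔ 2 * m + 2 < 2 * #(negIndices C (insert a s) ω)) :
    μ ({ω | P ω} ∩ {ω | R ω}) + (2 * m + 1).choose (m + 1) * 2⁻¹ ^ (2 * m + 2) = 2⁻¹ := by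
  rw [← Set.ofPred_and, measure_setOf_eq_of_ae_iff_negIndices hC hHead hTail hInd (insert a s)
      (fun u => 2 * m + 1 < 2 * #(u.erase a) ∧ 2 * m + 2 < 2 * #u)
      (by filter_upwards [hP, hR] with ω hPω hRω
          rw [hPω, hRω, ← negIndices_erase, erase_insert ha]),
    card_insert_of_notMem ha, hs, ← add_mul, ← Nat.cast_add,
    card_filter_powerset_insert_erase_and_add_choose ha hs]
  exact natCast_mul_inv_two_pow_eq_inv_two (pow_succ' 2 _).symm

end SignSequence

/-- For the CPDO net capital driven by i.i.d. fair signs with `δ = 0.01`: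
for every `0 ≤ m ≤ 98`, the conditioning event satisfies `P(X (2m+1) < 0) ≥ 2^{-(2m+1)} > 0`
and `P(X (2m+2) < 0 | X (2m+1) < 0) = 1 - (1/2^(2m+1)) · C(2m+1, m+1)`. -/
theorem cpdo_loss_after_odd_loss
    {Ω : Type*} [MeasureSpace Ω] [IsProbabilityMeasure (ℙ : Measure Ω)]
    (δ : ℝ) (hδ : δ = 0.01)
    (C : ℕ → Ω → ℝ)
    (hMeas : ∀ j, Measurable (C j))
    (hIndep : iIndepFun C ℙ)
    (hHead : ∀ j, ℙ {ω | C j ω = 1} = 1/2)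
    (hTail : ∀ j, ℙ {ω | C j ω = -1} = 1/2)
    (X : ℕ → Ω → ℝ)
    (hX : ∀ (k : ℕ) (ω : Ω), X k ω = 1 - ∏ j ∈ Finset.Icc 1 k, (1 - δ * C j ω)) :
    ∀ m : ℕ, m ≤ 98 →
      ((2 : ENNReal)⁻¹) ^ (2 * m + 1) ≤ ℙ {ω | X (2 * m + 1) ω < 0} ∧
      (ℙ[|{ω | X (2 * m + 1) ω < 0}] {ω | X (2 * m + 2) ω < 0}).toReal
        = 1 - (1 / 2 ^ (2 * m + 1)) * (Nat.choose (2 * m + 1) (m + 1) : ℝ) := by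
  intro m hm
  have hloss : ∀ᵐ ω ∂ℙ, ∀ k ≤ 198, X k ω < 0 ↔ k < 2 * #(negIndices C (Icc 1 k) ω) := by
    simpa only [← hX] using ae_one_sub_prod_Icc_neg_iff hMeas hHead hTail (K := 198)
      (δ := δ) (by norm_num [hδ]) (by norm_num [hδ]) (by norm_num [hδ])
  have hIcc : Icc 1 (2 * m + 2) = insert (2 * m + 2) (Icc 1 (2 * m + 1)) := by
    ext; simp; omega
  have hP : ∀ᵐ ω ∂ℙ, X (2 * m + 1) ω < 0 ↔
      2 * m + 1 < 2 * #(negIndices C (Icc 1 (2 * m + 1)) ω) :=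
    hloss.mono fun ω h => h _ (by omega)
  have hP1 := measure_eq_inv_two_of_ae_iff hMeas hHead hTail hIndep (by simp) hP
  have hP12 := measure_inter_add_choose_eq_inv_two_of_ae_iff hMeas hHead hTail hIndep
    (a := 2 * m + 2) (by simp) (by simp) hP (hloss.mono fun ω h => hIcc ▸ h _ (by omega))
  have hXmeas : Measurable (X (2 * m + 1)) := by
    rw [show X (2 * m + 1) = _ from funext (hX _)]; fun_prop
  refine ⟨by rw [hP1]; exact pow_le_of_le_one (by positivity) (by norm_num) (by omega), ?_⟩
  rw [toReal_cond_eq_one_sub (measurableSet_lt hXmeas measurable_const) (by simp [hP1])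
    (hP12.trans hP1.symm), hP1]
  simp only [ENNReal.toReal_mul, ENNReal.toReal_pow, ENNReal.toReal_inv, ENNReal.toReal_natCast,
    ENNReal.toReal_ofNat, inv_pow]
  field_simp
  ring
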